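/- The dual of a tiered tree with two tiers is again a tree: if F is a tiered forest with two tiers, then F is acyclic and connected if and only if its dual F' is acyclic and connected. More generally, F and F' have the same number of connected components. -/

import Mathlib

open Finset

attribute [local instance 10] Classical.propDecidable

noncomputable section

/-- An edge of a simple graph on `ℕ`, stored as an ordered pair `(u,v)` with `u < v` intended. -/
abbrev PEdge : Type := ℕ × ℕ

/-- A labelled edge (for multigraphs): an endpoint pair together with a label. -/
abbrev LEdge : Type := (ℕ × ℕ) × ℕ

def adjP (E : Finset PEdge) (u v : ℕ) : Prop := (u, v) ∈ E ∨ (v, u) ∈ E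

def reachP (E : Finset PEdge) : ℕ → ℕ → Prop := Relation.ReflTransGen (adjP E)

def connP (V : Finset ℕ) (E : Finset PEdge) : Prop :=
  (∀ e ∈ E, e.1 ∈ V ∧ e.2 ∈ V) ∧ ∀ u ∈ V, ∀ v ∈ V, reachP E u v

def IsTreeOn (V : Finset ℕ) (E : Finset PEdge) : Prop := connP V E ∧ E.card + 1 = V.card

/-- A graph on a finite set of naturals together with a tiering map. -/
structure PreGraph where
  V : Finset ℕ
  E : Finset PEdge
  t : ℕ → ℕ

/-- `G` is a tiered graph with two tiers. -/
def IsTiered (G : PreGraph) : Prop :=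
  (∀ v ∈ G.V, 0 < v) ∧
  (∀ e ∈ G.E, e.1 ∈ G.V ∧ e.2 ∈ G.V ∧ e.1 < e.2) ∧
  (∀ v ∈ G.V, G.t v = 1 ∨ G.t v = 2) ∧
  (∀ e ∈ G.E, G.t e.1 < G.t e.2)

/-- acyclicity: every edge is a bridge. -/
def IsForest (G : PreGraph) : Prop := ∀ e ∈ G.E, ¬ reachP (G.E.erase e) e.1 e.2

def IsTreeG (G : PreGraph) : Prop := IsTreeOn G.V G.E

/-- the connected component (vertex set) of `x`. -/
def comp (V : Finset ℕ) (E : Finset PEdge) (x : ℕ) : Finset ℕ :=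
  V.filter fun y => reachP E x y

/-- the order-reversing involution `x_i ↦ x_{s+1-i}` of a finite set `V = {x_1 < ... < x_s}`. -/
def flipMap (V : Finset ℕ) (x : ℕ) : ℕ :=
  if hx : x ∈ V then
    ((V.orderIsoOfFin rfl)
      ⟨V.card - 1 - ((V.orderIsoOfFin rfl).symm ⟨x, hx⟩).1, by
        have h := ((V.orderIsoOfFin rfl).symm ⟨x, hx⟩).isLt; omega⟩).1
  else x

/-- the dual of a (connected) tiered graph, via the global vertex ordering. -/
def dual (G : PreGraph) : PreGraph where
  V := G.V
  E := G.E.image fun e => (flipMap G.V e.2, flipMap G.V e.1)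
  t := fun x => if x ∈ G.V then 3 - G.t (flipMap G.V x) else G.t x

/-- the componentwise dual of a (possibly disconnected) tiered graph. -/
def cdual (G : PreGraph) : PreGraph where
  V := G.V
  E := G.E.image fun e => (flipMap (comp G.V G.E e.1) e.2, flipMap (comp G.V G.E e.1) e.1)
  t := fun x => if x ∈ G.V then 3 - G.t (flipMap (comp G.V G.E x) x) else G.t x

/-- the recursive weight of a tiered tree (fuel-based implementation; the recursion
depth is bounded by the number of vertices). -/
def weightAux : ℕ → PreGraph → ℕ
  | 0, _ => 0
  | fuel + 1, T =>
    if h : 2 ≤ T.V.card then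
      let v := T.V.min' (Finset.card_pos.mp (by omega))
      let V' := T.V.erase v
      let E' := T.E.filter fun e => e.1 ≠ v ∧ e.2 ≠ v
      ∑ u ∈ V'.filter (fun u => adjP T.E v u),
        (((comp V' E' u).filter fun y => y < u ∧ T.t v < T.t y).card
          + weightAux fuel ⟨comp V' E' u, E'.filter fun e => e.1 ∈ comp V' E' u, T.t⟩)
    else 0

def weight (T : PreGraph) : ℕ := weightAux T.V.card T

/-- edges of a complete tiered graph with tier 1 vertex set `A` and tier 2 vertex set `B`. -/
def ctE2 (A B : Finset ℕ) : Finset PEdge := (A ×ˢ B).filter fun e => e.1 < e.2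

/-- the edge set of the complete tiered graph determined by a two-tier tiered graph `G`. -/
def ctE (G : PreGraph) : Finset PEdge :=
  ctE2 (G.V.filter fun v => G.t v = 1) (G.V.filter fun v => G.t v = 2)

/-- edge set of the complete tiered graph on `[n]` determined by a tiering map `t`. -/
def ctEM (n : ℕ) (t : ℕ → ℕ) : Finset PEdge :=
  (Finset.Icc 1 n ×ˢ Finset.Icc 1 n).filter fun e => e.1 < e.2 ∧ t e.1 < t e.2

def extActiveP (T : Finset PEdge) (ω : PEdge → ℝ) (e : PEdge) : Prop :=
  e ∉ T ∧ reachP T e.1 e.2 ∧ ∀ e' ∈ T, ¬ reachP (T.erase e') e.1 e.2 → ω e < ω e'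

/-- external activity of the spanning forest `T` in the graph with edge set `E`. -/
def eaP (E T : Finset PEdge) (ω : PEdge → ℝ) : ℕ := (E.filter (extActiveP T ω)).card

def adjL (E : Finset LEdge) (u v : ℕ) : Prop := ∃ e ∈ E, e.1 = (u, v) ∨ e.1 = (v, u)
def reachL (E : Finset LEdge) : ℕ → ℕ → Prop := Relation.ReflTransGen (adjL E)
def connL (V : Finset ℕ) (E : Finset LEdge) : Prop := ∀ u ∈ V, ∀ v ∈ V, reachL E u v
def IsLTree (V : Finset ℕ) (T : Finset LEdge) : Prop := connL V T ∧ T.card + 1 = V.card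

def extActiveL (T : Finset LEdge) (ω : LEdge → ℝ) (e : LEdge) : Prop :=
  e ∉ T ∧ reachL T e.1.1 e.1.2 ∧ ∀ e' ∈ T, ¬ reachL (T.erase e') e.1.1 e.1.2 → ω e < ω e'

def eaL (E T : Finset LEdge) (ω : LEdge → ℝ) : ℕ := (E.filter (extActiveL T ω)).card

def omega1 (N : ℕ) (e : PEdge) : ℝ := (e.1 : ℝ) + (e.2 : ℝ) / (N : ℝ)
def omega2 (N : ℕ) (e : PEdge) : ℝ := ((N + 1 - e.2 : ℕ) : ℝ) + ((N + 1 - e.1 : ℕ) : ℝ) / (N : ℝ)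
def omegaLex (n : ℕ) (e : PEdge) : ℝ := ((e.1 * (n + 1) + e.2 : ℕ) : ℝ)

/-- representative (minimum) of the component of `x` in the forest `F` on vertex set `V`. -/
def rep (V : Finset ℕ) (F : Finset LEdge) (x : ℕ) : ℕ :=
  if hx : x ∈ V then
    (V.filter fun y => reachL F x y).min'
      ⟨x, Finset.mem_filter.mpr ⟨hx, Relation.ReflTransGen.refl⟩⟩
  else x

/-- image of an edge in the quotient graph `G • F`; the label encodes the original edge. -/
def quotEdge (ρ : ℕ → ℕ) (e : LEdge) : LEdge :=
  ((ρ e.1.1, ρ e.1.2), Nat.pair (Nat.pair e.1.1 e.1.2) e.2)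

/-- recover the original edge from a quotient edge. -/
def decodeE (e : LEdge) : LEdge :=
  (((Nat.unpair (Nat.unpair e.2).1).1, (Nat.unpair (Nat.unpair e.2).1).2), (Nat.unpair e.2).2)

/-- tiering map on `[n]` induced by `f : Fin n → Fin m` (tiers `1,...,m`). -/
def tf (n m : ℕ) (f : Fin n → Fin m) : ℕ → ℕ := fun v =>
  if h : v ∈ Finset.Icc 1 n then
    (f ⟨v - 1, by have := Finset.mem_Icc.mp h; omega⟩).1 + 1
  else 0

/-- `G` is a tiered graph with `m` tiers. -/
def IsTieredM (m : ℕ) (G : PreGraph) : Prop :=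
  (∀ e ∈ G.E, e.1 ∈ G.V ∧ e.2 ∈ G.V ∧ e.1 < e.2) ∧
  (∀ v ∈ G.V, G.t v ∈ Finset.Icc 1 m) ∧
  (∀ e ∈ G.E, G.t e.1 < G.t e.2) ∧
  (∀ i ∈ Finset.Icc 1 m, ∃ v ∈ G.V, G.t v = i)

/-- weight polynomial `P_p(q)` (recursive weight), evaluated at `q`. -/
def Pw (n m : ℕ) (p : ℕ → ℕ) (q : ℤ) : ℤ :=
  ∑ f : Fin n → Fin m,
    ∑ E ∈ ((Finset.Icc 1 n ×ˢ Finset.Icc 1 n).powerset.filter fun E =>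
        IsTreeG ⟨Finset.Icc 1 n, E, tf n m f⟩ ∧ IsTieredM m ⟨Finset.Icc 1 n, E, tf n m f⟩ ∧
        ∀ i ∈ Finset.Icc 1 m, ((Finset.Icc 1 n).filter fun v => tf n m f v = i).card = p i),
      q ^ weight ⟨Finset.Icc 1 n, E, tf n m f⟩

/-- weight polynomial `P_p(q)` with the weight of a tiered tree given by its external
activity in the complete tiered graph it determines (lexicographic edge order). -/
def PwEA (n m : ℕ) (p : ℕ → ℕ) (q : ℤ) : ℤ :=
  ∑ f : Fin n → Fin m,
    ∑ E ∈ ((Finset.Icc 1 n ×ˢ Finset.Icc 1 n).powerset.filter fun E =>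
        IsTreeG ⟨Finset.Icc 1 n, E, tf n m f⟩ ∧ IsTieredM m ⟨Finset.Icc 1 n, E, tf n m f⟩ ∧
        ∀ i ∈ Finset.Icc 1 m, ((Finset.Icc 1 n).filter fun v => tf n m f v = i).card = p i),
      q ^ eaP (ctEM n (tf n m f)) E (omegaLex n)

/-- `T^c_G(y)`: the Tutte evaluation `T_G(1,y)` (spanning tree expansion) for a connected
graph, `0` otherwise. -/
def TcP (V : Finset ℕ) (E : Finset PEdge) (ω : PEdge → ℝ) (y : ℤ) : ℤ :=
  if connP V E then ∑ T ∈ E.powerset.filter (fun T => IsTreeOn V T), y ^ eaP E T ω else 0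

/-- edge multiset of `H ∪ Q_S`: `H`-edges (labels `≠ 0`) together with the complete
tiered graph on `U` with tier-1 set `S` (labelled `0`). -/
def qE (U : Finset ℕ) (EH : Finset LEdge) (S : Finset ℕ) : Finset LEdge :=
  EH ∪ (ctE2 S (U \ S)).image fun p => (p, 0)

/-- `(S,T) ↦ (S*, T*)`: the dual quasi-tiered tree. -/
def dualTree (U : Finset ℕ) (ST : Finset ℕ × Finset LEdge) : Finset ℕ × Finset LEdge :=
  (U.filter fun v =>
      (cdual ⟨U, (ST.2.filter fun e => e.2 = 0).image Prod.fst,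
        fun w => if w ∈ ST.1 then 1 else 2⟩).t v = 1,
   (ST.2.filter fun e => e.2 ≠ 0) ∪
     (cdual ⟨U, (ST.2.filter fun e => e.2 = 0).image Prod.fst,
        fun w => if w ∈ ST.1 then 1 else 2⟩).E.image fun p => (p, 0))

/-- tiered forests on `U` with tier sizes `(p1, p2)` (tier map normalised off `U`). -/
def ForestSet (U : Finset ℕ) (p1 p2 : ℕ) : Set PreGraph :=
  {F | F.V = U ∧ IsTiered F ∧ IsForest F ∧
    (U.filter fun v => F.t v = 1).card = p1 ∧
    (U.filter fun v => F.t v = 2).card = p2 ∧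
    ∀ v, v ∉ U → F.t v = 0}

/-!
The componentwise dual is the image of the edge set under `(u, v) ↦ (g v, g u)`, where `g`
reverses the order inside each connected component. Since `g` is an involution, `u` and `v` are
joined in the dual iff `g u` and `g v` are joined in `F`; since `g x` lies in the component of
`x`, this happens iff `u` and `v` are joined in `F`. So the dual has the same components as `F`,
and every bridge of `F` is carried to a bridge of the dual.
-/

lemma reachP_symm {E : Finset PEdge} {u v : ℕ} (h : reachP E u v) : reachP E v u :=
  Relation.reflTransGen_swap.mp
    (Relation.ReflTransGen.mono (p := Function.swap (adjP E)) (fun _ _ => Or.symm) _ _ h)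

lemma comp_eq_of_reachP {V : Finset ℕ} {E : Finset PEdge} {x y : ℕ} (h : reachP E x y) :
    comp V E x = comp V E y :=
  Finset.filter_congr fun _ _ => ⟨(reachP_symm h).trans, h.trans⟩

lemma mem_comp_self {V : Finset ℕ} {E : Finset PEdge} {x : ℕ} (hx : x ∈ V) : x ∈ comp V E x :=
  Finset.mem_filter.mpr ⟨hx, Relation.ReflTransGen.refl⟩

section FlipMap

variable {S : Finset ℕ} {x : ℕ}

lemma flipMap_of_mem (hx : x ∈ S) :
    flipMap S x = S.orderIsoOfFin rfl ((S.orderIsoOfFin rfl).symm ⟨x, hx⟩).rev := by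
  rw [flipMap, dif_pos hx]
  congr 2
  ext
  simp only [Fin.val_rev]
  omega

lemma flipMap_of_not_mem (hx : x ∉ S) : flipMap S x = x := by
  rw [flipMap, dif_neg hx]

lemma flipMap_mem (hx : x ∈ S) : flipMap S x ∈ S := by
  rw [flipMap_of_mem hx]
  exact Finset.coe_mem _

lemma flipMap_flipMap (hx : x ∈ S) : flipMap S (flipMap S x) = x := by
  rw [flipMap_of_mem (flipMap_mem hx)]
  simp only [flipMap_of_mem hx, Subtype.coe_eta, OrderIso.symm_apply_apply, Fin.rev_rev,
    OrderIso.apply_symm_apply]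

end FlipMap

/-- The edge `(u, v)` goes to `(g v, g u)`, so that `u < v` is kept when `g` reverses order. -/
def edgeMap (g : ℕ → ℕ) (e : PEdge) : PEdge := (g e.2, g e.1)

section EdgeMap

variable {g : ℕ → ℕ}

lemma edgeMap_involutive (hg : Function.Involutive g) : Function.Involutive (edgeMap g) :=
  fun e => by simp only [edgeMap, hg e.1, hg e.2]

lemma adjP_image_edgeMap (hg : Function.Involutive g) (E : Finset PEdge) (u v : ℕ) :
    adjP (E.image (edgeMap g)) u v ↔ adjP E (g u) (g v) := by
  have hmem : ∀ a b, (a, b) ∈ E.image (edgeMap g) ↔ (g b, g a) ∈ E := fun a b => by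
    rw [show (a, b) = edgeMap g (g b, g a) by simp only [edgeMap, hg a, hg b]]
    exact (edgeMap_involutive hg).injective.mem_finset_image
  rw [adjP, adjP, hmem, hmem, or_comm]

lemma reachP_image_edgeMap (hg : Function.Involutive g) (E : Finset PEdge) (u v : ℕ) :
    reachP (E.image (edgeMap g)) u v ↔ reachP E (g u) (g v) := by
  refine ⟨fun h => h.lift g fun a b hab => (adjP_image_edgeMap hg E a b).mp hab, fun h => ?_⟩
  have hgg := h.lift g fun a b hab =>
    (adjP_image_edgeMap hg E (g a) (g b)).mpr (by rwa [hg a, hg b])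
  simpa only [Function.onFun, hg u, hg v, reachP] using hgg

lemma not_reachP_erase_image_edgeMap (hg : Function.Involutive g) {E : Finset PEdge}
    (hE : ∀ e ∈ E, ¬ reachP (E.erase e) e.1 e.2) :
    ∀ e ∈ E.image (edgeMap g), ¬ reachP ((E.image (edgeMap g)).erase e) e.1 e.2 := by
  rintro _ hmem
  obtain ⟨e, he, rfl⟩ := Finset.mem_image.mp hmem
  rw [← Finset.image_erase (edgeMap_involutive hg).injective, reachP_image_edgeMap hg]
  simpa only [edgeMap, hg e.1, hg e.2] using fun h => hE e he (reachP_symm h)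

end EdgeMap

def compFlip (V : Finset ℕ) (E : Finset PEdge) (x : ℕ) : ℕ := flipMap (comp V E x) x

section CompFlip

variable {V : Finset ℕ} {E : Finset PEdge}

lemma compFlip_of_not_mem {x : ℕ} (hx : x ∉ V) : compFlip V E x = x :=
  flipMap_of_not_mem fun h => hx (Finset.mem_filter.mp h).1

lemma compFlip_mem_comp {x : ℕ} (hx : x ∈ V) : compFlip V E x ∈ comp V E x :=
  flipMap_mem (mem_comp_self hx)

lemma reachP_compFlip (x : ℕ) : reachP E x (compFlip V E x) := by
  by_cases hx : x ∈ V
  · exact (Finset.mem_filter.mp (compFlip_mem_comp hx)).2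
  · rw [compFlip_of_not_mem hx]
    exact Relation.ReflTransGen.refl

lemma compFlip_mem_iff {x : ℕ} : compFlip V E x ∈ V ↔ x ∈ V := by
  by_cases hx : x ∈ V
  · exact iff_of_true (Finset.mem_filter.mp (compFlip_mem_comp hx)).1 hx
  · rw [compFlip_of_not_mem hx]

lemma compFlip_involutive : Function.Involutive (compFlip V E) := by
  intro x
  by_cases hx : x ∈ V
  · rw [compFlip, ← comp_eq_of_reachP (reachP_compFlip x)]
    exact flipMap_flipMap (mem_comp_self hx)
  · rw [compFlip_of_not_mem hx, compFlip_of_not_mem hx]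

lemma reachP_image_edgeMap_compFlip (u v : ℕ) :
    reachP (E.image (edgeMap (compFlip V E))) u v ↔ reachP E u v := by
  rw [reachP_image_edgeMap compFlip_involutive]
  exact ⟨fun h => (reachP_compFlip u).trans (h.trans (reachP_symm (reachP_compFlip v))),
    fun h => (reachP_symm (reachP_compFlip u)).trans (h.trans (reachP_compFlip v))⟩

end CompFlip

section CDual

variable (F : PreGraph)

lemma cdual_E : (cdual F).E = F.E.image (edgeMap (compFlip F.V F.E)) :=
  Finset.image_congr fun e he => by
    simp only [edgeMap, compFlip,
      comp_eq_of_reachP (V := F.V) (Relation.ReflTransGen.single (Or.inl he))]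

lemma reachP_cdual (u v : ℕ) : reachP (cdual F).E u v ↔ reachP F.E u v := by
  rw [cdual_E, reachP_image_edgeMap_compFlip]

lemma comp_cdual : comp (cdual F).V (cdual F).E = comp F.V F.E :=
  funext fun x => Finset.filter_congr fun y _ => reachP_cdual F x y

lemma connP_cdual_iff : connP (cdual F).V (cdual F).E ↔ connP F.V F.E := by
  have hedges : (∀ e ∈ (cdual F).E, e.1 ∈ F.V ∧ e.2 ∈ F.V) ↔
      ∀ e ∈ F.E, e.1 ∈ F.V ∧ e.2 ∈ F.V := by
    simp only [cdual_E, Finset.forall_mem_image, edgeMap, compFlip_mem_iff, and_comm]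
  simp only [connP, reachP_cdual]
  exact and_congr_left' hedges

lemma IsForest.cdual {F : PreGraph} (hF : IsForest F) : IsForest (cdual F) := by
  rw [IsForest, cdual_E]
  exact not_reachP_erase_image_edgeMap compFlip_involutive hF

end CDual

theorem stmt6_general (F : PreGraph) (hF : IsForest F) :
    ((IsForest F ∧ connP F.V F.E) ↔ (IsForest (cdual F) ∧ connP (cdual F).V (cdual F).E)) ∧
    (F.V.image fun x => comp F.V F.E x).card =
      ((cdual F).V.image fun x => comp (cdual F).V (cdual F).E x).card := by
  refine ⟨?_, by rw [comp_cdual]; rfl⟩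
  rw [connP_cdual_iff, iff_true_intro hF, iff_true_intro hF.cdual]

/-- the dual of a tiered tree with two tiers is again a tree:
a tiered forest `F` is acyclic and connected iff its dual `F'` is; more generally
`F` and `F'` have the same number of connected components. -/
theorem stmt6 (F : PreGraph) (hT : IsTiered F) (hF : IsForest F) :
    ((IsForest F ∧ connP F.V F.E) ↔ (IsForest (cdual F) ∧ connP (cdual F).V (cdual F).E)) ∧
    (F.V.image fun x => comp F.V F.E x).card =
      ((cdual F).V.image fun x => comp (cdual F).V (cdual F).E x).card :=
  stmt6_general F hF

end
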